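/- Let H₀, H₁, …, H_K be hyperplanes in ℝ^d in general position (every j ≤ d of them intersect in an affine subspace of dimension d−j, and no d+1 of them have a common point). Then H₀ intersects exactly Σ_{i=0}^{d−1} C(K, i) of the open d-dimensional cells of the arrangement of H₁,…,H_K; equivalently, the K hyperplanes partition H₀ into Σ_{i=0}^{d−1} C(K, i) relatively open (d−1)-dimensional cells. -/

import Mathlib

/-!
The open cells of an arrangement `{L i = c i}` are the nonempty sets `cell L c σ` of points
lying on prescribed sides `σ` of all hyperplanes: such a set is open and convex, and the side of
each hyperplane is constant on every connected subset of the complement, so the cells are the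
connected components.

Sign patterns are counted by deletion–restriction. Adding a hyperplane `H₀` to an arrangement
splits in two exactly the cells that meet `H₀` (an open convex set meeting both open half-spaces
meets `H₀`, and conversely), and these correspond to the cells of the induced arrangement on
`H₀`, which is again in general position, one dimension lower. Hence the number `f K n` of cells
of `K` hyperplanes in general position in dimension `n` satisfies
`f (K + 1) n = f K n + f K (n - 1)`, giving `f K n = ∑_{i ≤ n} C(K, i)`, and `H₀` meets
`f K (n - 1)` of them.
-/

open Module Set Function RealInnerProductSpace

theorem IsPreconnected.lt_iff_lt_of_forall_ne {X α : Type*} [TopologicalSpace X]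
    [LinearOrder α] [TopologicalSpace α] [OrderClosedTopology α] {s : Set X}
    (hs : IsPreconnected s) {g : X → α} (hg : ContinuousOn g s) {a : α}
    (ha : ∀ z ∈ s, g z ≠ a) {x y : X} (hx : x ∈ s) (hy : y ∈ s) : a < g x ↔ a < g y := by
  suffices key : ∀ x ∈ s, ∀ y ∈ s, a < g x → a < g y from ⟨key x hx y hy, key y hy x hx⟩
  intro x hx y hy hax
  by_contra! hya
  obtain ⟨z, hz, hza⟩ := hs.intermediate_value hy hx hg ⟨hya, hax.le⟩
  exact ha z hz hza

section OpenConvex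

variable {V : Type*} [NormedAddCommGroup V] [NormedSpace ℝ V]

theorem IsOpen.exists_mem_lt_apply {U : Set V} (hU : IsOpen U) {x : V} (hx : x ∈ U)
    {f : Dual ℝ V} (hf : f ≠ 0) : ∃ y ∈ U, f x < f y := by
  have hfU : IsOpen (f '' U) := f.isOpenMap_of_finiteDimensional (LinearMap.surjective hf) U hU
  obtain ⟨_, hlt, y, hy, rfl⟩ :=
    Filter.Eventually.exists_gt (hfU.mem_nhds (mem_image_of_mem f hx))
  exact ⟨y, hy, hlt⟩

theorem IsOpen.exists_mem_apply_lt {U : Set V} (hU : IsOpen U) {x : V} (hx : x ∈ U)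
    {f : Dual ℝ V} (hf : f ≠ 0) : ∃ y ∈ U, f y < f x := by
  obtain ⟨y, hy, hlt⟩ := hU.exists_mem_lt_apply hx (neg_ne_zero.2 hf)
  exact ⟨y, hy, by simpa using hlt⟩

theorem IsOpen.nonempty_iff_lt_or_gt {U : Set V} (hU : IsOpen U) {f : Dual ℝ V} (hf : f ≠ 0)
    (a : ℝ) : U.Nonempty ↔ (U ∩ {x | a < f x}).Nonempty ∨ (U ∩ {x | f x < a}).Nonempty := by
  refine ⟨fun ⟨x, hx⟩ => ?_, by rintro (h | h) <;> exact h.mono inter_subset_left⟩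
  rcases lt_trichotomy (f x) a with hlt | rfl | hgt
  · exact Or.inr ⟨x, hx, hlt⟩
  · exact Or.inl (hU.exists_mem_lt_apply hx hf)
  · exact Or.inl ⟨x, hx, hgt⟩

variable [FiniteDimensional ℝ V]

theorem IsOpen.nonempty_inter_hyperplane_iff {U : Set V} (hU : IsOpen U) (hUc : Convex ℝ U)
    {f : Dual ℝ V} (hf : f ≠ 0) (a : ℝ) :
    (U ∩ {x | f x = a}).Nonempty ↔
      (U ∩ {x | a < f x}).Nonempty ∧ (U ∩ {x | f x < a}).Nonempty := by
  constructor
  · rintro ⟨x, hx, rfl⟩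
    exact ⟨hU.exists_mem_lt_apply hx hf, hU.exists_mem_apply_lt hx hf⟩
  · rintro ⟨⟨x, hx, hax⟩, ⟨y, hy, hya⟩⟩
    exact hUc.isPreconnected.intermediate_value hy hx
      f.continuous_of_finiteDimensional.continuousOn ⟨hya.le, hax.le⟩

end OpenConvex

section Arrangement

variable {ι V : Type*} [AddCommGroup V] [Module ℝ V]

def cell (L : ι → Dual ℝ V) (c : ι → ℝ) (σ : ι → Bool) : Set V :=
  {x | ∀ i, if σ i then c i < L i x else L i x < c i}

def signPatterns (L : ι → Dual ℝ V) (c : ι → ℝ) (s : Set V) : Set (ι → Bool) :=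
  {σ | (cell L c σ ∩ s).Nonempty}

structure GeneralPosition (n : ℕ) (L : ι → Dual ℝ V) (c : ι → ℝ) : Prop where
  linearIndepOn : ∀ s : Finset ι, s.card ≤ n → LinearIndepOn ℝ L (s : Set ι)
  not_exists_common : ∀ s : Finset ι, s.card = n + 1 → ¬ ∃ x, ∀ i ∈ s, L i x = c i

variable {L : ι → Dual ℝ V} {c : ι → ℝ} {σ τ : ι → Bool} {x : V}

theorem mem_cell_iff : x ∈ cell L c σ ↔ ∀ i, L i x ≠ c i ∧ (c i < L i x ↔ σ i) := by
  refine forall_congr' fun i => ?_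
  cases σ i
  · simp only [Bool.false_eq_true, if_false, iff_false, not_lt]
    exact ⟨fun h => ⟨h.ne, h.le⟩, fun h => lt_of_le_of_ne h.2 h.1⟩
  · simp only [if_true, iff_true]
    exact ⟨fun h => ⟨h.ne', h⟩, And.right⟩

theorem exists_mem_cell (hx : ∀ i, L i x ≠ c i) : ∃ σ, x ∈ cell L c σ :=
  ⟨fun i => decide (c i < L i x), mem_cell_iff.2 fun i => ⟨hx i, by simp⟩⟩

theorem eq_of_mem_cell (hσ : x ∈ cell L c σ) (hτ : x ∈ cell L c τ) : σ = τ :=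
  funext fun i => Bool.eq_iff_iff.2 <| ((mem_cell_iff.1 hσ i).2).symm.trans (mem_cell_iff.1 hτ i).2

theorem cell_subset : cell L c σ ⊆ {y | ∀ i, L i y ≠ c i} :=
  fun _ hy i => (mem_cell_iff.1 hy i).1

theorem injOn_cell (s : Set V) : InjOn (cell L c) (signPatterns L c s) :=
  fun _ ⟨_, hx, _⟩ _ _ hστ => eq_of_mem_cell hx (hστ ▸ hx)

theorem convex_cell : Convex ℝ (cell L c σ) := by
  rw [cell, ofPred_forall]
  refine convex_iInter fun i => ?_
  cases σ i
  · exact convex_halfSpace_lt (L i).isLinear (c i)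
  · exact convex_halfSpace_gt (L i).isLinear (c i)

theorem mem_cell_cons {K : ℕ} {L : Fin (K + 1) → Dual ℝ V} {c : Fin (K + 1) → ℝ} {a : Bool}
    {τ : Fin K → Bool} :
    x ∈ cell L c (Fin.cons a τ) ↔
      (if a then c 0 < L 0 x else L 0 x < c 0) ∧
        x ∈ cell (Fin.tail L) (Fin.tail c) τ := by
  simp only [cell, mem_ofPred_eq, Fin.forall_fin_succ, Fin.cons_zero, Fin.cons_succ, Fin.tail]

theorem mem_cell_dualRestrict {W : Submodule ℝ V} {p : V} (u : W) :
    u ∈ cell (fun i => W.dualRestrict (L i)) (fun i => c i - L i p) σ ↔ p + u ∈ cell L c σ := by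
  simp only [cell, mem_ofPred_eq, Submodule.dualRestrict_apply, map_add, sub_lt_iff_lt_add',
    lt_sub_iff_add_lt']

theorem signPatterns_hyperplane_eq {f : Dual ℝ V} {a : ℝ} {p : V} (hp : f p = a) :
    signPatterns L c {x | f x = a} =
      signPatterns (fun i => (LinearMap.ker f).dualRestrict (L i)) (fun i => c i - L i p) univ := by
  ext σ
  constructor
  · rintro ⟨x, hx, hfx⟩
    refine ⟨⟨x - p, by simp [show f x = a from hfx, hp]⟩, ?_, mem_univ _⟩
    simpa [mem_cell_dualRestrict] using hx
  · rintro ⟨u, hu, -⟩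
    exact ⟨p + u, (mem_cell_dualRestrict u).1 hu, by simp [hp, LinearMap.mem_ker.1 u.2]⟩

namespace GeneralPosition

variable {n : ℕ}

theorem comp {ι' : Type*} (h : GeneralPosition n L c) {e : ι' → ι} (he : Injective e) :
    GeneralPosition n (L ∘ e) (c ∘ e) where
  linearIndepOn s hs := by
    have := h.linearIndepOn (s.map ⟨e, he⟩) (by simpa using hs)
    rw [Finset.coe_map] at this
    exact this.comp_of_image he.injOn
  not_exists_common s hs := by
    rintro ⟨x, hx⟩
    refine h.not_exists_common (s.map ⟨e, he⟩) (by simpa using hs) ⟨x, fun j hj => ?_⟩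
    obtain ⟨i, hi, rfl⟩ := Finset.mem_map.1 hj
    exact hx i hi

theorem ne_zero (h : GeneralPosition (n + 1) L c) (i : ι) : L i ≠ 0 :=
  (h.linearIndepOn {i} (by simp)).ne_zero (by simp)

theorem dualRestrict {K : ℕ} {L : Fin (K + 1) → Dual ℝ V} {c : Fin (K + 1) → ℝ}
    (h : GeneralPosition (n + 1) L c) {p : V} (hp : L 0 p = c 0) :
    GeneralPosition n (fun i => (LinearMap.ker (L 0)).dualRestrict (Fin.tail L i))
      (fun i => Fin.tail c i - Fin.tail L i p) where
  linearIndepOn s hs := by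
    have h0 : (0 : Fin (K + 1)) ∉ Fin.succ '' (s : Set (Fin K)) := by simp [Fin.succ_ne_zero]
    have hcons := h.linearIndepOn
      (Finset.cons 0 (s.map (Fin.succEmb K)) (by simp [Fin.succ_ne_zero])) (by simpa using hs)
    rw [Finset.coe_cons, Finset.coe_map, Fin.coe_succEmb, linearIndepOn_insert h0] at hcons
    have hker : LinearMap.ker (LinearMap.ker (L 0)).dualRestrict = ℝ ∙ L 0 := by
      rw [Submodule.dualRestrict_ker_eq_dualAnnihilator,
        ← LinearMap.range_dualMap_eq_dualAnnihilator_ker_of_surjective _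
          (LinearMap.surjective (h.ne_zero 0)), LinearMap.range_dualMap_dual_eq_span_singleton]
    refine (hcons.1.comp_of_image (Fin.succ_injective K).injOn).map ?_
    rw [hker, ← image_eq_range, image_comp]
    exact Submodule.disjoint_span_singleton_of_notMem hcons.2
  not_exists_common s hs := by
    rintro ⟨u, hu⟩
    have h0 : (0 : Fin (K + 1)) ∉ s.map (Fin.succEmb K) := by simp [Fin.succ_ne_zero]
    refine h.not_exists_common (Finset.cons 0 (s.map (Fin.succEmb K)) h0) (by simpa using hs)
      ⟨p + u, fun j hj => ?_⟩
    rcases Finset.mem_cons.1 hj with rfl | hj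
    · simp [hp, LinearMap.mem_ker.1 u.2]
    · obtain ⟨i, hi, rfl⟩ := Finset.mem_map.1 hj
      simpa [eq_sub_iff_add_eq', Fin.tail] using hu i hi

end GeneralPosition

end Arrangement

section Cells

variable {ι V : Type*} [NormedAddCommGroup V] [NormedSpace ℝ V] [FiniteDimensional ℝ V]
  {L : ι → Dual ℝ V} {c : ι → ℝ} {σ : ι → Bool}

theorem isOpen_cell [Finite ι] : IsOpen (cell L c σ) := by
  rw [cell, ofPred_forall]
  refine isOpen_iInter_of_finite fun i => ?_
  have hL := (L i).continuous_of_finiteDimensional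
  cases σ i
  · exact isOpen_lt hL continuous_const
  · exact isOpen_lt continuous_const hL

theorem connectedComponentIn_eq_cell {x : V} (hx : x ∈ cell L c σ) :
    connectedComponentIn {y | ∀ i, L i y ≠ c i} x = cell L c σ := by
  refine Subset.antisymm (fun y hy => mem_cell_iff.2 fun i => ?_)
    (convex_cell.isPreconnected.subset_connectedComponentIn hx cell_subset)
  have hsub := connectedComponentIn_subset {y | ∀ i, L i y ≠ c i} x
  refine ⟨hsub hy i, ?_⟩
  rw [← (mem_cell_iff.1 hx i).2]
  exact (isPreconnected_connectedComponentIn.lt_iff_lt_of_forall_ne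
    (L i).continuous_of_finiteDimensional.continuousOn (fun z hz => hsub hz i)
    (mem_connectedComponentIn (cell_subset hx)) hy).symm

end Cells

theorem ncard_eq_ncard_cons_true_add_ncard_cons_false {K : ℕ} (S : Set (Fin (K + 1) → Bool)) :
    S.ncard = {τ | Fin.cons true τ ∈ S}.ncard + {τ | Fin.cons false τ ∈ S}.ncard := by
  have hS : S = Fin.cons true '' {τ | Fin.cons true τ ∈ S} ∪
      Fin.cons false '' {τ | Fin.cons false τ ∈ S} := by
    ext σ
    rw [← Fin.cons_self_tail σ]
    cases σ 0 <;> simp [Fin.cons_right_injective _ |>.eq_iff]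
  have hdisj : Disjoint (Fin.cons true '' {τ | Fin.cons true τ ∈ S})
      (Fin.cons false '' {τ | Fin.cons false τ ∈ S}) := by
    rw [disjoint_left]
    rintro _ ⟨τ, -, rfl⟩ ⟨τ', -, h⟩
    simpa using congrFun h 0
  nth_rw 1 [hS]
  rw [ncard_union_eq hdisj, ncard_image_of_injective _ (Fin.cons_right_injective _),
    ncard_image_of_injective _ (Fin.cons_right_injective _)]

theorem sum_range_choose_succ (K n : ℕ) :
    ∑ i ∈ Finset.range (n + 1), (K + 1).choose i =
      ∑ i ∈ Finset.range (n + 1), K.choose i + ∑ i ∈ Finset.range n, K.choose i := by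
  rw [Finset.sum_range_succ', Finset.sum_range_succ' (K.choose ·)]
  simp only [Nat.choose_succ_succ, Finset.sum_add_distrib, Nat.choose_zero_right,
    Nat.succ_eq_add_one]
  omega

section Counting

variable {V : Type*} [NormedAddCommGroup V] [NormedSpace ℝ V] [FiniteDimensional ℝ V]

theorem ncard_signPatterns_univ_succ {K : ℕ} (L : Fin (K + 1) → Dual ℝ V) (c : Fin (K + 1) → ℝ)
    (h0 : L 0 ≠ 0) :
    (signPatterns L c univ).ncard =
      (signPatterns (Fin.tail L) (Fin.tail c) univ).ncard +
        (signPatterns (Fin.tail L) (Fin.tail c) {x | L 0 x = c 0}).ncard := by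
  set L' := Fin.tail L
  set c' := Fin.tail c
  have hside : ∀ a : Bool, {τ | Fin.cons a τ ∈ signPatterns L c univ} =
      signPatterns L' c' {x | if a then c 0 < L 0 x else L 0 x < c 0} := by
    intro a
    ext τ
    simp only [signPatterns, mem_ofPred_eq, inter_univ]
    exact ⟨fun ⟨x, hx⟩ => ⟨x, (mem_cell_cons.1 hx).2, (mem_cell_cons.1 hx).1⟩,
      fun ⟨x, hx, ha⟩ => ⟨x, mem_cell_cons.2 ⟨ha, hx⟩⟩⟩
  have hunion : signPatterns L' c' {x | c 0 < L 0 x} ∪ signPatterns L' c' {x | L 0 x < c 0} =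
      signPatterns L' c' univ := by
    ext τ
    simpa [signPatterns] using (isOpen_cell.nonempty_iff_lt_or_gt h0 (c 0)).symm
  have hinter : signPatterns L' c' {x | c 0 < L 0 x} ∩ signPatterns L' c' {x | L 0 x < c 0} =
      signPatterns L' c' {x | L 0 x = c 0} := by
    ext τ
    exact (isOpen_cell.nonempty_inter_hyperplane_iff convex_cell h0 (c 0)).symm
  rw [ncard_eq_ncard_cons_true_add_ncard_cons_false, hside, hside]
  simp only [if_true, Bool.false_eq_true, if_false]
  rw [← hunion, ← hinter, ncard_union_add_ncard_inter]

theorem ncard_signPatterns_univ_of_finrank_eq_zero {ι : Type*} {L : ι → Dual ℝ V} {c : ι → ℝ}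
    (h : GeneralPosition 0 L c) (hV : finrank ℝ V = 0) : (signPatterns L c univ).ncard = 1 := by
  have : Subsingleton V := finrank_zero_iff.1 hV
  have h0 : ∀ i, L i 0 ≠ c i := fun i hi => h.not_exists_common {i} rfl ⟨0, by simpa using hi⟩
  obtain ⟨σ, hσ⟩ := exists_mem_cell h0
  refine ncard_eq_one.2 ⟨σ, eq_singleton_iff_unique_mem.2 ⟨⟨0, hσ, mem_univ _⟩, ?_⟩⟩
  rintro τ ⟨x, hx, -⟩
  exact eq_of_mem_cell (Subsingleton.elim x 0 ▸ hx) hσ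

theorem ncard_signPatterns_univ {K n : ℕ} (L : Fin K → Dual ℝ V) (c : Fin K → ℝ)
    (h : GeneralPosition n L c) (hn : finrank ℝ V = n) :
    (signPatterns L c univ).ncard = ∑ i ∈ Finset.range (n + 1), K.choose i := by
  induction K generalizing V n with
  | zero =>
    have : signPatterns L c univ = univ :=
      eq_univ_of_forall fun σ => ⟨0, fun i => i.elim0, mem_univ _⟩
    simp [this, Finset.sum_range_succ']
  | succ K ih =>
    cases n with
    | zero => simp [ncard_signPatterns_univ_of_finrank_eq_zero h hn]
    | succ m =>
      obtain ⟨p, hp⟩ := LinearMap.surjective (h.ne_zero 0) (c 0)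
      have hker := Module.Dual.finrank_ker_add_one_of_ne_zero (h.ne_zero 0)
      rw [ncard_signPatterns_univ_succ L c (h.ne_zero 0), signPatterns_hyperplane_eq hp,
        ih (Fin.tail L) (Fin.tail c) (h.comp (Fin.succ_injective K)) hn,
        ih _ _ (h.dualRestrict hp) (by omega), sum_range_choose_succ]

theorem ncard_signPatterns_hyperplane {K : ℕ} (L : Fin (K + 1) → Dual ℝ V) (c : Fin (K + 1) → ℝ)
    (h : GeneralPosition (finrank ℝ V) L c) :
    (signPatterns (Fin.tail L) (Fin.tail c) {x | L 0 x = c 0}).ncard =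
      ∑ i ∈ Finset.range (finrank ℝ V), K.choose i := by
  cases hn : finrank ℝ V with
  | zero =>
    rw [hn] at h
    have : signPatterns (Fin.tail L) (Fin.tail c) {x | L 0 x = c 0} = ∅ :=
      eq_empty_of_forall_notMem fun τ ⟨x, _, hx⟩ =>
        h.not_exists_common {0} rfl ⟨x, by simpa using hx⟩
    simp [this]
  | succ m =>
    rw [hn] at h
    obtain ⟨p, hp⟩ := LinearMap.surjective (h.ne_zero 0) (c 0)
    have hker := Module.Dual.finrank_ker_add_one_of_ne_zero (h.ne_zero 0)
    rw [signPatterns_hyperplane_eq hp, ncard_signPatterns_univ _ _ (h.dualRestrict hp) (by omega)]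

theorem ncard_connectedComponentIn_meeting_hyperplane {K : ℕ} (L : Fin (K + 1) → Dual ℝ V)
    (c : Fin (K + 1) → ℝ) (h : GeneralPosition (finrank ℝ V) L c) :
    {C : Set V | ∃ x, (∀ i : Fin K, L i.succ x ≠ c i.succ) ∧ L 0 x = c 0 ∧
        C = connectedComponentIn {y | ∀ i : Fin K, L i.succ y ≠ c i.succ} x}.ncard =
      ∑ i ∈ Finset.range (finrank ℝ V), K.choose i := by
  have hcells : {C : Set V | ∃ x, (∀ i : Fin K, L i.succ x ≠ c i.succ) ∧ L 0 x = c 0 ∧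
        C = connectedComponentIn {y | ∀ i : Fin K, L i.succ y ≠ c i.succ} x} =
      cell (Fin.tail L) (Fin.tail c) ''
        signPatterns (Fin.tail L) (Fin.tail c) {x | L 0 x = c 0} := by
    ext C
    constructor
    · rintro ⟨x, hx, hx0, rfl⟩
      obtain ⟨σ, hσ⟩ := exists_mem_cell hx
      exact ⟨σ, ⟨x, hσ, hx0⟩, (connectedComponentIn_eq_cell hσ).symm⟩
    · rintro ⟨σ, ⟨x, hσ, hx0⟩, rfl⟩
      exact ⟨x, cell_subset hσ, hx0, (connectedComponentIn_eq_cell hσ).symm⟩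
  rw [hcells, (injOn_cell _).ncard_image, ncard_signPatterns_hyperplane L c h]

end Counting

theorem stmt_9_general (d K : ℕ)
    (w : Fin (K + 1) → EuclideanSpace ℝ (Fin d)) (b : Fin (K + 1) → ℝ)
    (hindep : ∀ s : Finset (Fin (K + 1)), s.card ≤ d →
      LinearIndependent ℝ (fun i : s => w i))
    (hnocommon : ∀ s : Finset (Fin (K + 1)), s.card = d + 1 →
      ¬ ∃ x : EuclideanSpace ℝ (Fin d), ∀ i ∈ s, ⟪w i, x⟫ = b i) :
    Set.ncard {C : Set (EuclideanSpace ℝ (Fin d)) |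
        ∃ x : EuclideanSpace ℝ (Fin d),
          (∀ i : Fin K, ⟪w i.succ, x⟫ ≠ b i.succ) ∧ ⟪w 0, x⟫ = b 0 ∧
          C = connectedComponentIn {y | ∀ i : Fin K, ⟪w i.succ, y⟫ ≠ b i.succ} x} =
      ∑ i ∈ Finset.range d, K.choose i := by
  have hinj : LinearMap.ker (innerₗ (EuclideanSpace ℝ (Fin d))) = ⊥ :=
    LinearMap.ker_eq_bot'.2 fun v hv => inner_self_eq_zero.1 (LinearMap.congr_fun hv v)
  have h : GeneralPosition (finrank ℝ (EuclideanSpace ℝ (Fin d)))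
      (fun i => innerₗ _ (w i)) b := by
    rw [finrank_euclideanSpace_fin]
    exact ⟨fun s hs => (hindep s hs).map' _ hinj, hnocommon⟩
  simpa using ncard_connectedComponentIn_meeting_hyperplane _ b h

/-- let `H₀, H₁, …, H_K` be hyperplanes `{x | ⟪w i, x⟫ = b i}` in `ℝ^d` in
general position (normals of any `≤ d` of them are linearly independent — so any `j ≤ d`
of them meet in an affine subspace of dimension `d − j` — and no `d+1` have a common
point). Then `H₀` meets exactly `∑_{i=0}^{d−1} C(K,i)` of the open cells (connected
components of the complement) of the arrangement of `H₁,…,H_K`. -/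
theorem stmt_9 (d K : ℕ)
    (w : Fin (K + 1) → EuclideanSpace ℝ (Fin d)) (b : Fin (K + 1) → ℝ)
    (hw : ∀ i, w i ≠ 0)
    (hindep : ∀ s : Finset (Fin (K + 1)), s.card ≤ d →
      LinearIndependent ℝ (fun i : s => w i))
    (hnocommon : ∀ s : Finset (Fin (K + 1)), s.card = d + 1 →
      ¬ ∃ x : EuclideanSpace ℝ (Fin d), ∀ i ∈ s, ⟪w i, x⟫ = b i) :
    Set.ncard {C : Set (EuclideanSpace ℝ (Fin d)) |
        ∃ x : EuclideanSpace ℝ (Fin d),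
          (∀ i : Fin K, ⟪w i.succ, x⟫ ≠ b i.succ) ∧ ⟪w 0, x⟫ = b 0 ∧
          C = connectedComponentIn {y | ∀ i : Fin K, ⟪w i.succ, y⟫ ≠ b i.succ} x} =
      ∑ i ∈ Finset.range d, K.choose i :=
  stmt_9_general d K w b hindep hnocommon
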